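/- Block subcode lemma: Let F_q be a finite field with q elements, let G ∈ F_q[z]^{k×n} (1 ≤ k < n) be right invertible and minimal with row degrees ν_1,…,ν_k, complexity δ = ν_1 + … + ν_k, memory m = max{ν_1,…,ν_k}, and free distance d = min{ wt(uG) : u ∈ F_q[z]^k, u ≠ 0 }. For an integer i with i ≥ 1 if km = δ, respectively i ≥ 0 if km > δ, let U_i = { (u_1,…,u_k) ∈ F_q[z]^k : deg u_l ≤ m+i-1-ν_l for l = 1,…,k } and C_i = { uG : u ∈ U_i }. Then C_i is an F_q-subspace of F_q[z]^n of dimension k(m+i) - δ over F_q, every entry of every vector in C_i has degree at most m+i-1, and every nonzero element of C_i has weight at least d. -/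

import Mathlib

/-!
The map `u ↦ uG` is `F`-linear, and it is injective because `G` has a right inverse. Hence
`C_i` is the image of `U_i = ∏_l F[z]_{<m+i-ν_l}` under an injective linear map, of dimension
`∑_l (m+i-ν_l) = k(m+i) - δ`. Each summand `u_l G_{lj}` of an entry of `uG` has degree
`< (m+i-ν_l) + ν_l = m+i`, and the weight bound is the definition of the free distance.
-/

open Polynomial Matrix

/-- The weight of a vector of polynomials: the total number of nonzero coefficients
occurring in its polynomial entries. -/
def polyWt {F : Type*} [Field F] {n : ℕ} (v : Fin n → Polynomial F) : ℕ :=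
  ∑ j, (v j).support.card

/-- The complexity of a polynomial generator matrix `G ∈ F[z]^{k×n}`:
the maximal degree of its `k×k` minors. -/
noncomputable def complexity {F : Type*} [Field F] {k n : ℕ}
    (G : Matrix (Fin k) (Fin n) (Polynomial F)) : ℕ :=
  Finset.univ.sup fun f : Fin k ↪ Fin n => ((G.submatrix id ⇑f).det).natDegree

/-- The `r`-th row degree of a polynomial matrix: the maximal degree of the
polynomial entries in row `r`. -/
noncomputable def rowDeg {F : Type*} [Field F] {k n : ℕ}
    (G : Matrix (Fin k) (Fin n) (Polynomial F)) (r : Fin k) : ℕ :=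
  Finset.univ.sup fun j => (G r j).natDegree

theorem Matrix.vecMul_injective_of_mul_eq_one {R k n : Type*} [Semiring R] [Fintype k]
    [Fintype n] [DecidableEq k] {G : Matrix k n R} {H : Matrix n k R} (hGH : G * H = 1) :
    Function.Injective fun u : k → R => u ᵥ* G := by
  intro u v huv
  simpa [vecMul_vecMul, hGH] using congrArg (· ᵥ* H) huv

theorem Submodule.finrank_pi_univ {K ι : Type*} [DivisionRing K] [Fintype ι] {M : ι → Type*}
    [∀ i, AddCommGroup (M i)] [∀ i, Module K (M i)] (p : ∀ i, Submodule K (M i))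
    [∀ i, FiniteDimensional K (p i)] :
    Module.finrank K (pi Set.univ p) = ∑ i, Module.finrank K (p i) := by
  let f : (∀ i, p i) →ₗ[K] ∀ i, M i := LinearMap.pi fun i => (p i).subtype ∘ₗ LinearMap.proj i
  have hf : Function.Injective f := fun x y hxy => funext fun i => Subtype.ext (congrFun hxy i)
  have hrange : LinearMap.range f = pi Set.univ p := by
    ext x
    refine ⟨?_, fun hx => ⟨fun i => ⟨x i, hx i trivial⟩, rfl⟩⟩
    rintro ⟨y, rfl⟩ i -
    exact (y i).2
  rw [← hrange, LinearMap.finrank_range_of_inj hf, Module.finrank_pi_fintype]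

namespace Polynomial

variable {R : Type*} [Semiring R]

theorem mem_degreeLT_sub_iff {p : R[X]} {N b : ℕ} (hb : b ≤ N) :
    p ∈ degreeLT R (N - b) ↔ ∀ t, N ≤ t + b → p.coeff t = 0 := by
  rw [mem_degreeLT, degree_lt_iff_coeff_zero]
  exact forall_congr' fun t => ⟨fun h ht => h (by omega), fun h ht => h (by omega)⟩

theorem mul_mem_degreeLT_add {p q : R[X]} {a b : ℕ} (hp : p ∈ degreeLT R a)
    (hq : q.natDegree ≤ b) : p * q ∈ degreeLT R (a + b) := by
  by_cases hp0 : p = 0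
  · simp [hp0]
  have hpa : p.natDegree < a := (natDegree_lt_iff_degree_lt hp0).2 (mem_degreeLT.1 hp)
  rw [mem_degreeLT]
  calc (p * q).degree ≤ (p * q).natDegree := degree_le_natDegree
    _ < ↑(a + b) := by exact_mod_cast natDegree_mul_le.trans_lt (by omega)

theorem vecMul_mem_degreeLT {ι n : Type*} [Fintype ι]
    {G : Matrix ι n R[X]} {u : ι → R[X]} {ν : ι → ℕ} {N : ℕ}
    (hG : ∀ l j, (G l j).natDegree ≤ ν l) (hν : ∀ l, ν l ≤ N)
    (hu : ∀ l, u l ∈ degreeLT R (N - ν l)) (j : n) :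
    (u ᵥ* G) j ∈ degreeLT R N :=
  Submodule.sum_mem _ fun l _ => by
    simpa [Nat.sub_add_cancel (hν l)] using mul_mem_degreeLT_add (hu l) (hG l j)

theorem finrank_pi_degreeLT {K ι : Type*} [Field K] [Fintype ι] (c : ι → ℕ) :
    Module.finrank K (Submodule.pi Set.univ fun l => degreeLT K (c l)) = ∑ l, c l := by
  have : ∀ l, FiniteDimensional K (degreeLT K (c l)) :=
    fun l => .equiv (degreeLTEquiv K (c l)).symm
  rw [Submodule.finrank_pi_univ]
  exact Finset.sum_congr rfl fun l _ => by
    rw [(degreeLTEquiv K (c l)).finrank_eq, Module.finrank_fin_fun]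

end Polynomial

theorem natDegree_le_rowDeg {F : Type*} [Field F] {k n : ℕ}
    (G : Matrix (Fin k) (Fin n) F[X]) (r : Fin k) (j : Fin n) :
    (G r j).natDegree ≤ rowDeg G r :=
  Finset.le_sup (f := fun j => (G r j).natDegree) (Finset.mem_univ j)

theorem block_subcode_lemma_general
    {F : Type*} [Field F] {k n : ℕ}
    (G : Matrix (Fin k) (Fin n) (Polynomial F))
    (hright : ∃ H : Matrix (Fin n) (Fin k) (Polynomial F), G * H = 1)
    (ν : Fin k → ℕ) (hν : ∀ r, ν r = rowDeg G r)
    (δ m : ℕ) (hδ : δ = ∑ r, ν r)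
    (hm : m = Finset.univ.sup ν)
    (d : ℕ)
    (hd : IsLeast {w : ℕ | ∃ u : Fin k → Polynomial F,
      u ≠ 0 ∧ w = polyWt (Matrix.vecMul u G)} d)
    (i : ℕ) :
    (∃ W : Submodule F (Fin n → Polynomial F),
      (W : Set (Fin n → Polynomial F)) =
        {v | ∃ u : Fin k → Polynomial F,
          (∀ l t, m + i ≤ t + ν l → (u l).coeff t = 0) ∧ v = Matrix.vecMul u G} ∧
      Module.finrank F W = k * (m + i) - δ) ∧
    (∀ u : Fin k → Polynomial F, (∀ l t, m + i ≤ t + ν l → (u l).coeff t = 0) →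
      ∀ j, (Matrix.vecMul u G j).degree < ((m + i : ℕ) : WithBot ℕ)) ∧
    (∀ u : Fin k → Polynomial F, (∀ l t, m + i ≤ t + ν l → (u l).coeff t = 0) →
      Matrix.vecMul u G ≠ 0 → d ≤ polyWt (Matrix.vecMul u G)) := by
  obtain ⟨H, hGH⟩ := hright
  have hνle : ∀ l, ν l ≤ m + i := fun l =>
    (hm ▸ Finset.le_sup (Finset.mem_univ l)).trans (Nat.le_add_right m i)
  set U : Submodule F (Fin k → F[X]) := Submodule.pi Set.univ fun l => degreeLT F (m + i - ν l)
  have hU : ∀ u : Fin k → F[X], (∀ l t, m + i ≤ t + ν l → (u l).coeff t = 0) ↔ u ∈ U :=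
    fun u => by simp [U, mem_degreeLT_sub_iff (hνle _)]
  let φ : (Fin k → F[X]) →ₗ[F] Fin n → F[X] := (vecMulLinear G).restrictScalars F
  refine ⟨⟨U.map φ, ?_, ?_⟩, fun u hu j => ?_, fun u _ hne => ?_⟩
  · ext v
    simp only [Submodule.map_coe, Set.mem_image, SetLike.mem_coe, Set.mem_ofPred_eq, hU]
    exact exists_congr fun u => and_congr_right fun _ => eq_comm
  · rw [← (U.equivMapOfInjective φ (vecMul_injective_of_mul_eq_one hGH)).finrank_eq,
      finrank_pi_degreeLT, Finset.sum_tsub_distrib _ fun l _ => hνle l, hδ]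
    simp
  · have hG : ∀ l j, (G l j).natDegree ≤ ν l := fun l j => hν l ▸ natDegree_le_rowDeg G l j
    exact mem_degreeLT.1 (vecMul_mem_degreeLT hG hνle (fun l => (hU u).1 hu l trivial) j)
  · exact hd.2 ⟨u, fun hu => hne (hu ▸ zero_vecMul G), rfl⟩

/-- **Block subcode lemma.**
Let `F_q` be a finite field, `G ∈ F_q[z]^{k×n}` (`1 ≤ k < n`) right invertible and
minimal with row degrees `ν`, complexity `δ = ∑ ν r`, memory `m = max ν`, and free
distance `d`.  For an admissible `i` (with `i ≥ 1` if `km = δ`, resp. `i ≥ 0` if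
`km > δ`), let `U_i = { u ∈ F_q[z]^k : deg u_l ≤ m+i-1-ν_l }` (the degree condition
being encoded coefficientwise: `(u l).coeff t = 0` whenever `m + i ≤ t + ν l`)
and `C_i = { uG : u ∈ U_i }`.  Then `C_i` is an `F_q`-subspace of `F_q[z]^n` of
dimension `k(m+i) - δ` over `F_q`, every entry of every vector in `C_i` has degree
at most `m+i-1`, and every nonzero element of `C_i` has weight at least `d`. -/
theorem block_subcode_lemma
    {F : Type*} [Field F] [Fintype F] {k n : ℕ}
    (hk : 1 ≤ k) (hkn : k < n)
    (G : Matrix (Fin k) (Fin n) (Polynomial F))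
    (hright : ∃ H : Matrix (Fin n) (Fin k) (Polynomial F), G * H = 1)
    (ν : Fin k → ℕ) (hν : ∀ r, ν r = rowDeg G r)
    (δ m : ℕ) (hδ : δ = ∑ r, ν r)
    (hminimal : complexity G = δ)
    (hm : m = Finset.univ.sup ν)
    (d : ℕ)
    (hd : IsLeast {w : ℕ | ∃ u : Fin k → Polynomial F,
      u ≠ 0 ∧ w = polyWt (Matrix.vecMul u G)} d)
    (i : ℕ) (hi : k * m = δ → 1 ≤ i) :
    (∃ W : Submodule F (Fin n → Polynomial F),
      (W : Set (Fin n → Polynomial F)) =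
        {v | ∃ u : Fin k → Polynomial F,
          (∀ l t, m + i ≤ t + ν l → (u l).coeff t = 0) ∧ v = Matrix.vecMul u G} ∧
      Module.finrank F W = k * (m + i) - δ) ∧
    (∀ u : Fin k → Polynomial F, (∀ l t, m + i ≤ t + ν l → (u l).coeff t = 0) →
      ∀ j, (Matrix.vecMul u G j).degree < ((m + i : ℕ) : WithBot ℕ)) ∧
    (∀ u : Fin k → Polynomial F, (∀ l t, m + i ≤ t + ν l → (u l).coeff t = 0) →
      Matrix.vecMul u G ≠ 0 → d ≤ polyWt (Matrix.vecMul u G)) :=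
  block_subcode_lemma_general G hright ν hν δ m hδ hm d hd i
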